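/- arXiv:2408.03774 — 3 statements merged into one kernel-verified Lean document; each statement's English description precedes it below -/
import Mathlib

section
/- Let $(t_0, d_0, u_0)$ be an integer point on the surface $t^2 - du^2 = 1$. Then for every integer $z$, the triple $(t(z), d(z), u(z))$ with $t(z) = (t_0+1)u_0^4 z^2 + 2(t_0+1)u_0^2 z + t_0$, $d(z) = (t_0+1)^2 u_0^2 z^2 + 2(t_0+1)^2 z + d_0$, and $u(z) = u_0^3 z + u_0$ also satisfies $t(z)^2 - d(z) u(z)^2 = 1$. -/
theorem pellian_A1_curve (t₀ d₀ u₀ : ℤ) (h : t₀ ^ 2 - d₀ * u₀ ^ 2 = 1) (z : ℤ) :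
    ((t₀ + 1) * u₀ ^ 4 * z ^ 2 + 2 * (t₀ + 1) * u₀ ^ 2 * z + t₀) ^ 2 -
      ((t₀ + 1) ^ 2 * u₀ ^ 2 * z ^ 2 + 2 * (t₀ + 1) ^ 2 * z + d₀) *
        (u₀ ^ 3 * z + u₀) ^ 2 = 1 := by
  linear_combination (u₀ ^ 2 * z + 1) ^ 2 * h
end

section
/- Suppose $t, d, u$ are positive integers with $t^2 - du^2 = 1$, $t$ even, and $u \neq 0$. Then there exist positive integers $d_1, d_2, u_1, u_2$ with $d = d_1 d_2$, $u = u_1 u_2$, and $d_1 u_1^2 - d_2 u_2^2 = 2$. -/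
theorem pell_initial_decomposition_even (t d u : ℤ)
    (ht : 0 < t) (hd : 0 < d) (hu : 0 < u)
    (hsol : t ^ 2 - d * u ^ 2 = 1) (hte : Even t) (hune : u ≠ 0) :
    ∃ d₁ d₂ u₁ u₂ : ℤ, 0 < d₁ ∧ 0 < d₂ ∧ 0 < u₁ ∧ 0 < u₂ ∧
      d = d₁ * d₂ ∧ u = u₁ * u₂ ∧ d₁ * u₁ ^ 2 - d₂ * u₂ ^ 2 = 2 := by
  obtain ⟨m, hm⟩ := hte
  have ht2 : 2 ≤ t := by omega
  have hcop : IsCoprime (t + 1) (t - 1) := ⟨1 - m, m, by rw [hm]; ring⟩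
  have hprod : (t + 1) * (t - 1) = d * u ^ 2 := by linarith [hsol]
  have hudvd : u ∣ (t + 1) * (t - 1) := ⟨d * u, by rw [hprod]; ring⟩
  obtain ⟨a, b, ha, hb, hab⟩ := exists_dvd_and_dvd_of_dvd_mul hudvd
  have ha0 : a ≠ 0 := by rintro rfl; simp at hab; omega
  have hb0 : b ≠ 0 := by rintro rfl; simp at hab; omega
  have hcopa : IsCoprime (a ^ 2) (t - 1) :=
    (hcop.of_isCoprime_of_dvd_left ha).pow_left
  have hcopb : IsCoprime (t + 1) (b ^ 2) :=
    (hcop.of_isCoprime_of_dvd_right hb).pow_right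
  have hu2 : u ^ 2 ∣ (t + 1) * (t - 1) := ⟨d, by rw [hprod]; ring⟩
  have ha2 : a ^ 2 ∣ t + 1 := by
    refine hcopa.dvd_of_dvd_mul_right (dvd_trans ?_ hu2)
    exact pow_dvd_pow_of_dvd ⟨b, hab⟩ 2
  have hb2 : b ^ 2 ∣ t - 1 := by
    refine hcopb.symm.dvd_of_dvd_mul_left (dvd_trans ?_ hu2)
    exact pow_dvd_pow_of_dvd ⟨a, by rw [hab]; ring⟩ 2
  obtain ⟨d₁, hd₁⟩ := ha2
  obtain ⟨d₂, hd₂⟩ := hb2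
  have hd₁pos : 0 < d₁ := by
    rcases lt_or_ge 0 d₁ with h | h
    · exact h
    · nlinarith [sq_nonneg a, sq_pos_of_ne_zero ha0]
  have hd₂pos : 0 < d₂ := by
    rcases lt_or_ge 0 d₂ with h | h
    · exact h
    · nlinarith [sq_pos_of_ne_zero hb0]
  refine ⟨d₁, d₂, |a|, |b|, hd₁pos, hd₂pos, abs_pos.mpr ha0, abs_pos.mpr hb0, ?_, ?_, ?_⟩
  · -- d = d₁ * d₂
    have h : d * u ^ 2 = d₁ * d₂ * u ^ 2 := by
      rw [← hprod, hd₁, hd₂, hab]; ring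
    have hu2ne : u ^ 2 ≠ 0 := pow_ne_zero 2 hune
    exact mul_right_cancel₀ hu2ne h
  · -- u = |a| * |b|
    rw [← abs_mul, ← hab, abs_of_pos hu]
  · -- d₁ * |a|^2 - d₂ * |b|^2 = 2
    rw [sq_abs, sq_abs]
    have h1 : d₁ * a ^ 2 = t + 1 := by rw [hd₁]; ring
    have h2 : d₂ * b ^ 2 = t - 1 := by rw [hd₂]; ring
    omega
end

section
/- Suppose $t, d, u$ are positive integers with $t^2 - du^2 = 1$, $t$ odd, $4 \nmid d$, and $u \neq 0$. Then there exist positive integers $d_1, d_2, u_1, u_2$ with $d = d_1 d_2$, $u = 2 u_1 u_2$, and $d_1 u_1^2 - d_2 u_2^2 = 1$. -/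
/-!
Write `t = 2k + 1`. Modulo 4 the equation forces `u = 2v` (an odd `u` would give `4 ∣ d`), and then
`(k + 1) k = d v²`. Since `k + 1` and `k` are coprime, `d = gcd(d, k+1) gcd(d, k)`, and after
dividing these out the cofactors are coprime with product `v²`, hence both squares.
-/

theorem Nat.exists_mul_sq_of_coprime_of_mul_eq_mul_sq {a b d v : ℕ} (hab : a.Coprime b)
    (hd : d ≠ 0) (h : a * b = d * v ^ 2) :
    ∃ d₁ d₂ u₁ u₂ : ℕ, d = d₁ * d₂ ∧ v = u₁ * u₂ ∧ a = d₁ * u₁ ^ 2 ∧ b = d₂ * u₂ ^ 2 := by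
  have hd_split : d = d.gcd a * d.gcd b := by
    rw [← hab.gcd_mul d, Nat.gcd_eq_left ⟨v ^ 2, h⟩]
  set d₁ := d.gcd a
  set d₂ := d.gcd b
  obtain ⟨a', ha⟩ : d₁ ∣ a := Nat.gcd_dvd_right d a
  obtain ⟨b', hb⟩ : d₂ ∣ b := Nat.gcd_dvd_right d b
  have hab' : a'.Coprime b' :=
    (hab.coprime_dvd_left (Dvd.intro_left _ ha.symm)).coprime_dvd_right (Dvd.intro_left _ hb.symm)
  have hsq : a' * b' = v ^ 2 := by
    refine Nat.eq_of_mul_eq_mul_left (Nat.pos_of_ne_zero hd) ?_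
    calc d * (a' * b') = a * b := by rw [ha, hb, hd_split]; ring
      _ = d * v ^ 2 := h
  obtain ⟨u₁, rfl⟩ := exists_eq_pow_of_mul_eq_pow (Nat.isUnit_iff.2 hab') hsq
  obtain ⟨u₂, rfl⟩ :=
    exists_eq_pow_of_mul_eq_pow (Nat.isUnit_iff.2 hab'.symm) ((mul_comm _ _).trans hsq)
  refine ⟨d₁, d₂, u₁, u₂, hd_split, ?_, ha, hb⟩
  exact Nat.pow_left_injective two_ne_zero (by simpa only [mul_pow] using hsq.symm)

theorem Int.even_of_sq_sub_mul_sq_eq_one {t d u : ℤ} (h : t ^ 2 - d * u ^ 2 = 1) (ht : Odd t)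
    (hd : ¬ 4 ∣ d) : Even u := by
  by_contra hu
  have ht4 : 4 ∣ t ^ 2 - 1 := Int.ModEq.dvd (Int.sq_mod_four_eq_one_of_odd ht).symm
  have hu4 : 4 ∣ u ^ 2 - 1 :=
    Int.ModEq.dvd (Int.sq_mod_four_eq_one_of_odd (Int.not_even_iff_odd.mp hu)).symm
  refine hd ?_
  have hd_eq : d = (t ^ 2 - 1) - d * (u ^ 2 - 1) := by linear_combination -h
  rw [hd_eq]
  exact dvd_sub ht4 (hu4.mul_left d)

theorem pell_initial_decomposition_odd_general (t d u : ℤ)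
    (ht : 0 < t) (hd : 0 < d) (hu : 0 < u)
    (hsol : t ^ 2 - d * u ^ 2 = 1) (hto : Odd t) (h4 : ¬ (4 ∣ d)) :
    ∃ d₁ d₂ u₁ u₂ : ℤ, 0 < d₁ ∧ 0 < d₂ ∧ 0 < u₁ ∧ 0 < u₂ ∧
      d = d₁ * d₂ ∧ u = 2 * u₁ * u₂ ∧ d₁ * u₁ ^ 2 - d₂ * u₂ ^ 2 = 1 := by
  obtain ⟨v, rfl⟩ := (Int.even_of_sq_sub_mul_sq_eq_one hsol hto h4).two_dvd
  obtain ⟨k, rfl⟩ := hto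
  have hkv : (k + 1) * k = d * v ^ 2 := by linarith
  lift k to ℕ using by omega
  lift v to ℕ using by omega
  lift d to ℕ using hd.le
  have hkvN : (k + 1) * k = d * v ^ 2 := by exact_mod_cast hkv
  obtain ⟨d₁, d₂, u₁, u₂, rfl, rfl, hk₁, hk₂⟩ :=
    Nat.exists_mul_sq_of_coprime_of_mul_eq_mul_sq
      (Nat.coprime_self_add_left.2 (Nat.coprime_one_left k)) (by omega) hkvN
  obtain ⟨hd₁, hd₂⟩ := CanonicallyOrderedAdd.mul_pos.1 (by exact_mod_cast hd : 0 < d₁ * d₂)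
  obtain ⟨hu₁, hu₂⟩ := CanonicallyOrderedAdd.mul_pos.1 (by omega : 0 < u₁ * u₂)
  zify at hk₁ hk₂
  exact ⟨d₁, d₂, u₁, u₂, by positivity, by positivity, by positivity, by positivity,
    by push_cast; ring, by push_cast; ring, by linear_combination hk₂ - hk₁⟩

theorem pell_initial_decomposition_odd (t d u : ℤ)
    (ht : 0 < t) (hd : 0 < d) (hu : 0 < u)
    (hsol : t ^ 2 - d * u ^ 2 = 1) (hto : Odd t) (h4 : ¬ (4 ∣ d)) (hune : u ≠ 0) :
    ∃ d₁ d₂ u₁ u₂ : ℤ, 0 < d₁ ∧ 0 < d₂ ∧ 0 < u₁ ∧ 0 < u₂ ∧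
      d = d₁ * d₂ ∧ u = 2 * u₁ * u₂ ∧ d₁ * u₁ ^ 2 - d₂ * u₂ ^ 2 = 1 :=
  pell_initial_decomposition_odd_general t d u ht hd hu hsol hto h4
end
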